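/- Under the stated probabilistic setup, let v_1, …, v_m and v'_1, …, v'_m be random vectors in ℝ^d (the value vectors attached to the m relevant positions in two contexts C_n and C'_n that agree on all non-relevant positions and have identical attention scores, not depending on n) with E‖v_i‖² < ∞ and E‖v'_i‖² < ∞ for each i, and let f : ℝ^d → ℝ^k be L-Lipschitz. Writing h(C_n) = Σ_{i=1}^n α_i v_i and h(C'_n) = Σ_{i=1}^n α_i v'_i for the attention outputs (so that h(C_n) − h(C'_n) = Σ_{i∈R} α_i (v_i − v'_i)), it holds that ‖f(h(C_n)) − f(h(C'_n))‖ → 0 in probability as n → ∞. -/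

import Mathlib

/-!
Because both contexts carry the same scores and the same tail values, `h n − h' n` is the
relevant part `Σ_{i ∈ R} α_i (v_i − v'_i)` alone. Each relevant weight `α_i` is a fixed
numerator over a denominator containing the noise partial sum `Σ_{j < n−m} exp (S^n_j)`, which
by the strong law grows like `(n − m) μ_n` and hence diverges almost surely. So `h n − h' n → 0`
almost surely, therefore in probability, and the Lipschitz bound
`‖f (h n) − f (h' n)‖ ≤ L ‖h n − h' n‖` transfers this to the outputs.
-/

open MeasureTheory ProbabilityTheory Filter Real Finset Topology

section Probability

variable {Ω : Type*} [MeasurableSpace Ω] {P : Measure Ω}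

theorem ae_tendsto_sum_range_atTop_of_integral_pos (X : ℕ → Ω → ℝ)
    (hint : Integrable (X 0) P) (hindep : Pairwise (Function.onFun (IndepFun · · P) X))
    (hident : ∀ j, IdentDistrib (X j) (X 0) P P) (hpos : 0 < P[X 0]) :
    ∀ᵐ ω ∂P, Tendsto (fun N : ℕ => ∑ j ∈ range N, X j ω) atTop atTop := by
  filter_upwards [strong_law_ae_real X hint hindep hident] with ω hω
  refine ((tendsto_natCast_atTop_atTop (R := ℝ)).atTop_mul_pos hpos hω).congr' ?_
  filter_upwards [eventually_ne_atTop 0] with N hN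
  field_simp

theorem tendsto_measure_norm_gt_of_norm_le {ι E F : Type*} {l : Filter ι}
    [SeminormedAddCommGroup E] [SeminormedAddCommGroup F]
    {f : ι → Ω → E} {g : ι → Ω → F} (hg : TendstoInMeasure P g l 0)
    (hfg : ∀ i ω, ‖f i ω‖ ≤ ‖g i ω‖) {ε : ℝ} (hε : 0 < ε) :
    Tendsto (fun i => P {ω | ‖f i ω‖ > ε}) l (𝓝 0) := by
  refine tendsto_of_tendsto_of_tendsto_of_le_of_le tendsto_const_nhds
    (tendstoInMeasure_iff_norm.1 hg ε hε) (fun _ => zero_le) fun i => measure_mono ?_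
  intro ω hω
  simpa using hω.le.trans (hfg i ω)

theorem tendsto_measure_norm_gt_of_norm_le_mul_of_ae_tendsto [IsFiniteMeasure P]
    {E F : Type*} [SeminormedAddCommGroup E] [NormedAddCommGroup F] [NormedSpace ℝ F]
    {f : ℕ → Ω → E} {g : ℕ → Ω → F} (hg_meas : ∀ n, AEStronglyMeasurable (g n) P)
    (hg : ∀ᵐ ω ∂P, Tendsto (g · ω) atTop (𝓝 0)) {C : ℝ} (hC : 0 ≤ C)
    (hfg : ∀ n ω, ‖f n ω‖ ≤ C * ‖g n ω‖) {ε : ℝ} (hε : 0 < ε) :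
    Tendsto (fun n => P {ω | ‖f n ω‖ > ε}) atTop (𝓝 0) := by
  have hCg : TendstoInMeasure P (fun n ω => C • g n ω) atTop 0 :=
    tendstoInMeasure_of_tendsto_ae (fun n => (hg_meas n).const_smul C) <| by
      filter_upwards [hg] with ω hω
      simpa using hω.const_smul C
  refine tendsto_measure_norm_gt_of_norm_le hCg (fun n ω => ?_) hε
  simpa only [norm_smul, Real.norm_of_nonneg hC] using hfg n ω

end Probability

section SoftmaxAttention

variable {Ω : Type*} {m : ℕ} (Sr : Fin m → Ω → ℝ) (Sn : ℕ → Ω → ℝ)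

/-- The softmax weight `α_i` of the relevant position `i` in the context of length `n`, whose
`n - m` noise positions carry the scores `Sn 0, …, Sn (n - m - 1)`. -/
noncomputable def relevantWeight (n : ℕ) (i : Fin m) (ω : Ω) : ℝ :=
  exp (Sr i ω) / ((∑ a : Fin m, exp (Sr a ω)) + ∑ j ∈ range (n - m), exp (Sn j ω))

theorem measurable_relevantWeight [MeasurableSpace Ω] (hSr : ∀ i, Measurable (Sr i))
    (hSn : ∀ j, Measurable (Sn j)) (n : ℕ) (i : Fin m) :
    Measurable (relevantWeight Sr Sn n i) :=
  (hSr i).exp.div <| (Finset.measurable_sum _ fun a _ => (hSr a).exp).add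
    (Finset.measurable_sum _ fun j _ => (hSn j).exp)

theorem tendsto_relevantWeight_zero {ω : Ω}
    (hω : Tendsto (fun N : ℕ => ∑ j ∈ range N, exp (Sn j ω)) atTop atTop) (i : Fin m) :
    Tendsto (fun n => relevantWeight Sr Sn n i ω) atTop (𝓝 0) :=
  tendsto_const_nhds.div_atTop <|
    tendsto_atTop_add_const_left _ _ (hω.comp (tendsto_sub_atTop_nat m))

end SoftmaxAttention

theorem lipschitz_output_insensitivity_in_probability_general
    {Ω : Type*} [MeasurableSpace Ω] (P : Measure Ω) [IsProbabilityMeasure P]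
    (m d k : ℕ)
    (Sr : Fin m → Ω → ℝ) (Sn : ℕ → Ω → ℝ)
    (hSr_meas : ∀ i, Measurable (Sr i)) (hSn_meas : ∀ j, Measurable (Sn j))
    (hindep : iIndepFun
      (fun i : Fin m ⊕ ℕ => Sum.elim Sr Sn i) P)
    (hSn_id : ∀ j : ℕ, IdentDistrib (Sn j) (Sn 0) P P)
    (hμn : Integrable (fun ω => exp (Sn 0 ω)) P)
    (v v' : Fin m → Ω → EuclideanSpace ℝ (Fin d))
    (w : ℕ → Ω → EuclideanSpace ℝ (Fin d))
    (hv_meas : ∀ i, Measurable (v i)) (hv'_meas : ∀ i, Measurable (v' i))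
    (L : NNReal) (f : EuclideanSpace ℝ (Fin d) → EuclideanSpace ℝ (Fin k))
    (hf : LipschitzWith L f)
    -- the attention outputs of the two contexts, sharing scores and tail values
    (h h' : ℕ → Ω → EuclideanSpace ℝ (Fin d))
    (hh : ∀ n ω, h n ω =
      (∑ i : Fin m,
          (exp (Sr i ω) /
              ((∑ a : Fin m, exp (Sr a ω)) +
                ∑ j ∈ Finset.range (n - m), exp (Sn j ω))) • v i ω) +
      ∑ j ∈ Finset.range (n - m),
          (exp (Sn j ω) /
              ((∑ a : Fin m, exp (Sr a ω)) +
                ∑ b ∈ Finset.range (n - m), exp (Sn b ω))) • w j ω)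
    (hh' : ∀ n ω, h' n ω =
      (∑ i : Fin m,
          (exp (Sr i ω) /
              ((∑ a : Fin m, exp (Sr a ω)) +
                ∑ j ∈ Finset.range (n - m), exp (Sn j ω))) • v' i ω) +
      ∑ j ∈ Finset.range (n - m),
          (exp (Sn j ω) /
              ((∑ a : Fin m, exp (Sr a ω)) +
                ∑ b ∈ Finset.range (n - m), exp (Sn b ω))) • w j ω) :
    ∀ ε > (0 : ℝ),
      Tendsto (fun n : ℕ => P {ω | ‖f (h n ω) - f (h' n ω)‖ > ε})
        atTop (nhds 0) := by
  intro ε hε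
  set G : ℕ → Ω → EuclideanSpace ℝ (Fin d) :=
    fun n ω => ∑ i, relevantWeight Sr Sn n i ω • (v i ω - v' i ω)
  have hdiff (n : ℕ) (ω : Ω) : h n ω - h' n ω = G n ω := by
    simp only [hh, hh', add_sub_add_right_eq_sub, ← sum_sub_distrib, ← smul_sub, G,
      relevantWeight]
  have hnoise : ∀ᵐ ω ∂P, Tendsto (fun N : ℕ => ∑ j ∈ range N, exp (Sn j ω)) atTop atTop :=
    ae_tendsto_sum_range_atTop_of_integral_pos (fun j ω => exp (Sn j ω)) hμn
      (fun i j hij => (hindep.indepFun (Sum.inr_injective.ne hij)).comp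
        measurable_exp measurable_exp)
      (fun j => (hSn_id j).comp measurable_exp) (integral_exp_pos hμn)
  have hG_ae : ∀ᵐ ω ∂P, Tendsto (G · ω) atTop (𝓝 0) := by
    filter_upwards [hnoise] with ω hω
    simpa using tendsto_finsetSum univ fun i _ =>
      (tendsto_relevantWeight_zero Sr Sn hω i).smul_const (v i ω - v' i ω)
  have hG_meas (n : ℕ) : Measurable (G n) :=
    Finset.measurable_sum _ fun i _ =>
      (measurable_relevantWeight Sr Sn hSr_meas hSn_meas n i).smul
        ((hv_meas i).sub (hv'_meas i))
  refine tendsto_measure_norm_gt_of_norm_le_mul_of_ae_tendsto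
    (fun n => (hG_meas n).aestronglyMeasurable) hG_ae L.coe_nonneg (fun n ω => ?_) hε
  rw [← hdiff, ← dist_eq_norm, ← dist_eq_norm]
  exact hf.dist_le_mul _ _

/-- **Unified long-context degradation.**
Under the i.i.d. score setup, consider two contexts `C_n` and `C'_n` that share
the same attention scores (hence the same softmax weights) and the same value
vectors `w j : Ω → ℝ^d` at the non-relevant positions, and differ only in the
value vectors `v i` resp. `v' i` at the `m` relevant positions
(with `E‖v i‖² < ∞` and `E‖v' i‖² < ∞`, not depending on `n`).
Let `f : ℝ^d → ℝ^k` be `L`-Lipschitz. Writing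
`h(C_n) = Σ_{i=1}^n α_i v_i` and `h(C'_n) = Σ_{i=1}^n α_i v'_i`
(so that `h(C_n) − h(C'_n) = Σ_{i ∈ R} α_i (v_i − v'_i)`),
we have `‖f (h (C_n)) − f (h (C'_n))‖ → 0` in probability as `n → ∞`. -/
theorem lipschitz_output_insensitivity_in_probability
    {Ω : Type*} [MeasurableSpace Ω] (P : Measure Ω) [IsProbabilityMeasure P]
    (m d k : ℕ) (hm : 0 < m)
    (Sr : Fin m → Ω → ℝ) (Sn : ℕ → Ω → ℝ)
    (hSr_meas : ∀ i, Measurable (Sr i)) (hSn_meas : ∀ j, Measurable (Sn j))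
    (hindep : iIndepFun
      (fun i : Fin m ⊕ ℕ => Sum.elim Sr Sn i) P)
    (hSr_id : ∀ i : Fin m, IdentDistrib (Sr i) (Sr ⟨0, hm⟩) P P)
    (hSn_id : ∀ j : ℕ, IdentDistrib (Sn j) (Sn 0) P P)
    (hμr : Integrable (fun ω => exp (Sr ⟨0, hm⟩ ω)) P)
    (hμn : Integrable (fun ω => exp (Sn 0 ω)) P)
    (v v' : Fin m → Ω → EuclideanSpace ℝ (Fin d))
    (w : ℕ → Ω → EuclideanSpace ℝ (Fin d))
    (hv_meas : ∀ i, Measurable (v i)) (hv'_meas : ∀ i, Measurable (v' i))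
    (hw_meas : ∀ j, Measurable (w j))
    (hv_sq_int : ∀ i, Integrable (fun ω => ‖v i ω‖ ^ 2) P)
    (hv'_sq_int : ∀ i, Integrable (fun ω => ‖v' i ω‖ ^ 2) P)
    (L : NNReal) (f : EuclideanSpace ℝ (Fin d) → EuclideanSpace ℝ (Fin k))
    (hf : LipschitzWith L f)
    -- the attention outputs of the two contexts, sharing scores and tail values
    (h h' : ℕ → Ω → EuclideanSpace ℝ (Fin d))
    (hh : ∀ n ω, h n ω =
      (∑ i : Fin m,
          (exp (Sr i ω) /
              ((∑ a : Fin m, exp (Sr a ω)) +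
                ∑ j ∈ Finset.range (n - m), exp (Sn j ω))) • v i ω) +
      ∑ j ∈ Finset.range (n - m),
          (exp (Sn j ω) /
              ((∑ a : Fin m, exp (Sr a ω)) +
                ∑ b ∈ Finset.range (n - m), exp (Sn b ω))) • w j ω)
    (hh' : ∀ n ω, h' n ω =
      (∑ i : Fin m,
          (exp (Sr i ω) /
              ((∑ a : Fin m, exp (Sr a ω)) +
                ∑ j ∈ Finset.range (n - m), exp (Sn j ω))) • v' i ω) +
      ∑ j ∈ Finset.range (n - m),
          (exp (Sn j ω) /
              ((∑ a : Fin m, exp (Sr a ω)) +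
                ∑ b ∈ Finset.range (n - m), exp (Sn b ω))) • w j ω) :
    ∀ ε > (0 : ℝ),
      Tendsto (fun n : ℕ => P {ω | ‖f (h n ω) - f (h' n ω)‖ > ε})
        atTop (nhds 0) :=
  lipschitz_output_insensitivity_in_probability_general P m d k Sr Sn hSr_meas hSn_meas hindep
    hSn_id hμn v v' w hv_meas hv'_meas L f hf h h' hh hh'
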